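/- arXiv:math-ph/0502021 — 6 statements merged into one kernel-verified Lean document; each statement's English description precedes it below -/
import Mathlib

section
/- Let n ≥ 1 and let U ⊆ ℝⁿ be a nonempty open connected set. If f : ℝⁿ → ℝ is real-analytic at every point of U and f is not identically zero on U, then the zero set {x ∈ U : f(x) = 0} has Lebesgue measure zero. -/
/-!
On an interval, an analytic function that is not identically zero has isolated, hence countably
many, zeros. On a box `I × Q` we slice along the first coordinate: fixing `y₀` with
`f (t₀, y₀) ≠ 0`, every `t ∈ I` outside the countable zero set of `f (·, y₀)` gives a slice
`f (t, ·)` that is not identically zero on `Q`, whose zero set is null by induction on the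
dimension; Fubini–Tonelli then makes the zero set of `f` null. An open connected `U` is covered by
countably many cubes, on none of which `f` vanishes identically, by the identity theorem.
-/

open MeasureTheory Set Filter Topology

theorem AnalyticOnNhd.countable_setOf_eq_zero {𝕜 E : Type*} [NontriviallyNormedField 𝕜]
    [HereditarilyLindelofSpace 𝕜] [NormedAddCommGroup E] [NormedSpace 𝕜 E] {f : 𝕜 → E}
    {U : Set 𝕜} (hf : AnalyticOnNhd 𝕜 f U) (hU : IsPreconnected U) (hne : ∃ x ∈ U, f x ≠ 0) :
    {x ∈ U | f x = 0}.Countable := by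
  obtain ⟨x₀, hx₀U, hx₀⟩ := hne
  rcases hf.eqOn_zero_or_eventually_ne_zero_of_preconnected hU with hzero | hcodiscrete
  · exact absurd (hzero hx₀U) hx₀
  · have hdisc : IsDiscrete ({x | f x = 0} ∩ U) := isDiscrete_of_codiscreteWithin hcodiscrete
    rw [inter_comm] at hdisc
    exact (HereditarilyLindelofSpace.isLindelof _).countable_of_isDiscrete hdisc

theorem AnalyticOnNhd.exists_ne_zero_of_subset {𝕜 E F : Type*} [NontriviallyNormedField 𝕜]
    [NormedAddCommGroup E] [NormedSpace 𝕜 E] [NormedAddCommGroup F] [NormedSpace 𝕜 F]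
    {f : E → F} {U V : Set E} (hf : AnalyticOnNhd 𝕜 f U) (hU : IsPreconnected U)
    (hne : ∃ x ∈ U, f x ≠ 0) (hVo : IsOpen V) (hV : V.Nonempty) (hVU : V ⊆ U) :
    ∃ x ∈ V, f x ≠ 0 := by
  by_contra! hzero
  obtain ⟨y, hyV⟩ := hV
  obtain ⟨x, hxU, hx⟩ := hne
  have hy : f =ᶠ[𝓝 y] 0 := eventually_of_mem (hVo.mem_nhds hyV) hzero
  exact hx (hf.eqOn_zero_of_preconnected_of_eventuallyEq_zero hU (hVU hyV) hy hxU)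

section

variable {E : Type*} [NormedAddCommGroup E] [NormedSpace ℝ E] [MeasurableSpace E]

def AnalyticZeroSetsNull (μ : Measure E) (s : Set E) : Prop :=
  ∀ f : E → ℝ, AnalyticOnNhd ℝ f s → (∃ x ∈ s, f x ≠ 0) → μ {x ∈ s | f x = 0} = 0

theorem analyticZeroSetsNull_of_subsingleton [Subsingleton E] (μ : Measure E) (s : Set E) :
    AnalyticZeroSetsNull μ s := by
  rintro f - ⟨x₀, -, hx₀⟩
  convert measure_empty (μ := μ)
  exact eq_empty_of_forall_notMem fun x hx => hx₀ (Subsingleton.elim x x₀ ▸ hx.2)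

theorem AnalyticZeroSetsNull.of_measurePreserving_preimage {F : Type*} [NormedAddCommGroup F]
    [NormedSpace ℝ F] [MeasurableSpace F] [BorelSpace E] [BorelSpace F]
    {μ : Measure E} {ν : Measure F} {s : Set F} (e : E ≃L[ℝ] F) (he : MeasurePreserving e μ ν)
    (hs : AnalyticZeroSetsNull μ (e ⁻¹' s)) : AnalyticZeroSetsNull ν s := by
  rintro f hf ⟨y, hys, hy⟩
  have hfe : AnalyticOnNhd ℝ (f ∘ e) (e ⁻¹' s) := fun x hx =>
    (hf (e x) hx).comp ((e : E →L[ℝ] F).analyticAt x)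
  rw [← he.measure_preimage_emb e.toHomeomorph.measurableEmbedding]
  exact hs _ hfe ⟨e.symm y, by simpa using hys, by simpa using hy⟩

theorem AnalyticZeroSetsNull.prod [OpensMeasurableSpace E] {μ : Measure E} [SFinite μ]
    {I : Set ℝ} {Q : Set E} (hQ : AnalyticZeroSetsNull μ Q) (hIo : IsOpen I)
    (hIc : IsPreconnected I) (hQo : IsOpen Q) :
    AnalyticZeroSetsNull (volume.prod μ) (I ×ˢ Q) := by
  rintro f hf ⟨⟨t₀, y₀⟩, ⟨ht₀, hy₀⟩, hf₀⟩
  have hslice_t : ∀ y ∈ Q, AnalyticOnNhd ℝ (fun t => f (t, y)) I := fun y hy t ht =>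
    (hf (t, y) ⟨ht, hy⟩).comp (f := fun s => (s, y)) (analyticAt_id.prod analyticAt_const)
  have hslice_y : ∀ t ∈ I, AnalyticOnNhd ℝ (fun y => f (t, y)) Q := fun t ht y hy =>
    (hf (t, y) ⟨ht, hy⟩).comp (f := fun z => (t, z)) (analyticAt_const.prod analyticAt_id)
  have hZ : MeasurableSet {x ∈ I ×ˢ Q | f x = 0} := by
    have hIQ : IsOpen (I ×ˢ Q) := hIo.prod hQo
    have hnz := hf.continuousOn.isOpen_inter_preimage hIQ (isOpen_compl_singleton (x := (0 : ℝ)))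
    convert hIQ.measurableSet.diff hnz.measurableSet using 1
    ext x
    simp
  have hbad : {t ∈ I | f (t, y₀) = 0}.Countable :=
    (hslice_t y₀ hy₀).countable_setOf_eq_zero hIc ⟨t₀, ht₀, hf₀⟩
  rw [Measure.measure_prod_null hZ]
  filter_upwards [hbad.ae_notMem volume] with t ht
  by_cases htI : t ∈ I
  · have hne : ∃ y ∈ Q, f (t, y) ≠ 0 := ⟨y₀, hy₀, fun h => ht ⟨htI, h⟩⟩
    simpa [preimage, htI] using hQ _ (hslice_y t htI) hne
  · simp [preimage, htI]

end

theorem measurePreserving_consEquivL (n : ℕ) :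
    MeasurePreserving (Fin.consEquivL ℝ fun _ : Fin (n + 1) => ℝ) := by
  refine ((volume_preserving_piFinSuccAbove (fun _ : Fin (n + 1) => ℝ) 0).symm).congr
    (Fin.consEquivL ℝ _).continuous.measurable (Eventually.of_forall fun x => ?_)
  simp only [MeasurableEquiv.piFinSuccAbove_symm_apply, Fin.insertNthEquiv, Fin.insertNth_zero']
  rfl

theorem analyticZeroSetsNull_univ_pi {n : ℕ} {s : Fin n → Set ℝ} (hso : ∀ i, IsOpen (s i))
    (hsc : ∀ i, IsPreconnected (s i)) : AnalyticZeroSetsNull volume (univ.pi s) := by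
  induction n with
  | zero => exact analyticZeroSetsNull_of_subsingleton _ _
  | succ n ih =>
    refine AnalyticZeroSetsNull.of_measurePreserving_preimage _ (measurePreserving_consEquivL n) ?_
    have hpre : Fin.consEquivL ℝ (fun _ => ℝ) ⁻¹' univ.pi s =
        s 0 ×ˢ univ.pi fun i => s i.succ := by
      ext ⟨t, y⟩
      simp [Fin.forall_fin_succ]
    rw [hpre, Measure.volume_eq_prod]
    exact (ih (fun i => hso i.succ) fun i => hsc i.succ).prod (hso 0) (hsc 0)
      (isOpen_set_pi finite_univ fun i _ => hso i.succ)

theorem zero_set_of_analyticOnNhd_real_volume_eq_zero_general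
    (n : ℕ) (U : Set (Fin n → ℝ))
    (hUopen : IsOpen U) (hUconn : IsConnected U)
    (f : (Fin n → ℝ) → ℝ) (hf : AnalyticOnNhd ℝ f U)
    (hne : ¬ (∀ x ∈ U, f x = 0)) :
    volume {x | x ∈ U ∧ f x = 0} = 0 := by
  push Not at hne
  refine measure_null_of_locally_null _ fun x hx => ?_
  obtain ⟨r, hr, hrU⟩ := Metric.isOpen_iff.1 hUopen x hx.1
  set box := univ.pi fun i => Metric.ball (x i) r
  have hbox_open : IsOpen box := isOpen_set_pi finite_univ fun _ _ => Metric.isOpen_ball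
  have hx_box : x ∈ box := mem_univ_pi.2 fun _ => Metric.mem_ball_self hr
  have hbox_U : box ⊆ U := by rwa [ball_pi x hr] at hrU
  have hnull : volume {y ∈ box | f y = 0} = 0 :=
    analyticZeroSetsNull_univ_pi (fun _ => Metric.isOpen_ball)
      (fun _ => (convex_ball _ _).isPreconnected) f (hf.mono hbox_U)
      (hf.exists_ne_zero_of_subset hUconn.isPreconnected hne hbox_open ⟨x, hx_box⟩ hbox_U)
  exact ⟨{y ∈ box | f y = 0},
    mem_nhdsWithin.2 ⟨box, hbox_open, hx_box, fun y hy => ⟨hy.1, hy.2.2⟩⟩, hnull⟩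

/-- **Lemma 5.1 (real case).** If `f : ℝⁿ → ℝ` is real-analytic on a nonempty open
connected set `U` and is not identically zero on `U`, then its zero set inside `U`
has Lebesgue measure zero. -/
theorem zero_set_of_analyticOnNhd_real_volume_eq_zero
    (n : ℕ) (hn : 1 ≤ n) (U : Set (Fin n → ℝ))
    (hUne : U.Nonempty) (hUopen : IsOpen U) (hUconn : IsConnected U)
    (f : (Fin n → ℝ) → ℝ) (hf : AnalyticOnNhd ℝ f U)
    (hne : ¬ (∀ x ∈ U, f x = 0)) :
    volume {x | x ∈ U ∧ f x = 0} = 0 :=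
  zero_set_of_analyticOnNhd_real_volume_eq_zero_general n U hUopen hUconn f hf hne
end

section
/- Let L be a finite-dimensional real Lie algebra, equipped with its canonical topology as a finite-dimensional real vector space, and let μ be an additive Haar measure on L. Then the set of elements of L that are not regular, i.e. {x ∈ L : ¬ LieAlgebra.IsRegular ℝ x}, has μ-measure zero. -/
/-!
In coordinates given by a basis `b`, the regular elements are those at which the polynomial
`x ↦ (polyCharpoly (ad ℝ L) b).coeff (rank ℝ L)` does not vanish, and this polynomial is nonzero.
The zero set of a nonzero real polynomial in `n` variables is Lebesgue-null: by Fubini, almost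
every slice `x₀ = a` avoids the finitely many `a` at which the polynomial, viewed as a polynomial
in `x₀`, vanishes identically, and every other slice is null by induction on `n`. Finally, any
Haar measure is absolutely continuous with respect to Lebesgue measure in these coordinates.
-/

open MeasureTheory

theorem volume_eq_zero_of_ae_volume_setOf_cons_mem_eq_zero {α : Type*} [MeasureSpace α]
    [SigmaFinite (volume : Measure α)] {n : ℕ} {s : Set (Fin (n + 1) → α)} (hs : MeasurableSet s)
    (h : ∀ᵐ a : α, volume {y : Fin n → α | Fin.cons a y ∈ s} = 0) :
    volume s = 0 := by
  have hπ := (volume_preserving_piFinSuccAbove (fun _ : Fin (n + 1) => α) 0).symm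
  rw [← hπ.measure_preimage_equiv, Measure.volume_eq_prod,
    Measure.measure_prod_null (hs.preimage (MeasurableEquiv.measurable _))]
  filter_upwards [h] with a ha
  simp only [MeasurableEquiv.piFinSuccAbove_symm_apply, Fin.insertNthEquiv, Fin.insertNth_zero',
    Equiv.coe_fn_mk]
  exact ha

namespace MvPolynomial

theorem eval_cons_eq_eval_eval_finSuccEquiv {R : Type*} [CommSemiring R] {n : ℕ} (a : R)
    (y : Fin n → R) (p : MvPolynomial (Fin (n + 1)) R) :
    eval (Fin.cons a y) p = eval y ((finSuccEquiv R n p).eval (C a)) := by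
  rw [eval_eq_eval_mv_eval', Polynomial.eval_map, Polynomial.eval, Polynomial.hom_eval₂]
  simp

theorem volume_setOf_eval_eq_zero {n : ℕ} {p : MvPolynomial (Fin n) ℝ} (hp : p ≠ 0) :
    volume {x : Fin n → ℝ | eval x p = 0} = 0 := by
  induction n with
  | zero =>
    rw [eq_C_of_isEmpty p, Ne, C_eq_zero] at hp
    rw [eq_C_of_isEmpty p]
    simp [hp]
  | succ n ih =>
    set P := finSuccEquiv ℝ n p
    have hP : P ≠ 0 := (map_ne_zero_iff _ (finSuccEquiv ℝ n).injective).mpr hp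
    have hroots : {a : ℝ | P.eval (C a) = 0}.Finite :=
      (Polynomial.finite_setOfPred_isRoot hP).preimage (C_injective _ _).injOn
    refine volume_eq_zero_of_ae_volume_setOf_cons_mem_eq_zero
      ((continuous_eval p).measurable (measurableSet_singleton 0)) ?_
    filter_upwards [hroots.countable.ae_notMem volume] with a ha
    simpa only [Set.preimage_ofPred_eq, eval_cons_eq_eval_eval_finSuccEquiv] using ih ha

theorem addHaar_setOf_eval_repr_eq_zero {E : Type*} [AddCommGroup E] [Module ℝ E]
    [TopologicalSpace E] [IsTopologicalAddGroup E] [ContinuousSMul ℝ E] [T2Space E]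
    [MeasurableSpace E] [BorelSpace E] (μ : Measure E) [μ.IsAddHaarMeasure] {n : ℕ}
    (b : Module.Basis (Fin n) ℝ E) {p : MvPolynomial (Fin n) ℝ} (hp : p ≠ 0) :
    μ {x : E | eval (b.repr x) p = 0} = 0 := by
  have : FiniteDimensional ℝ E := b.finiteDimensional_of_finite
  let e : E ≃L[ℝ] (Fin n → ℝ) := b.equivFun.toContinuousLinearEquiv
  have : (μ.map e).IsAddHaarMeasure := e.isAddHaarMeasure_map μ
  have hZ : MeasurableSet {y : Fin n → ℝ | eval y p = 0} :=
    (continuous_eval p).measurable (measurableSet_singleton 0)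
  rw [show {x : E | eval (b.repr x) p = 0} = e ⁻¹' {y | eval y p = 0} by ext; rfl,
    ← Measure.map_apply e.continuous.measurable hZ]
  exact Measure.absolutelyContinuous_isAddHaarMeasure _ volume (volume_setOf_eval_eq_zero hp)

end MvPolynomial

/-- **Proposition 5.2 (Lie algebra case).** In a finite-dimensional real Lie algebra,
endowed with its canonical topology as a finite-dimensional real vector space, the set
of non-regular (i.e. singular) elements has measure zero for any additive Haar measure. -/
theorem singular_set_of_lieAlgebra_measure_eq_zero
    (L : Type*) [LieRing L] [LieAlgebra ℝ L] [FiniteDimensional ℝ L]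
    [TopologicalSpace L] [IsTopologicalAddGroup L] [ContinuousSMul ℝ L] [T2Space L]
    [MeasurableSpace L] [BorelSpace L]
    (μ : Measure L) [μ.IsAddHaarMeasure] :
    μ {x : L | ¬ LieAlgebra.IsRegular ℝ x} = 0 := by
  let b := Module.finBasis ℝ L
  simpa only [LieAlgebra.isRegular_iff_coeff_polyCharpoly_rank_ne_zero (b := b), not_not] using
    MvPolynomial.addHaar_setOf_eval_repr_eq_zero μ b
      (LieAlgebra.polyCharpoly_coeff_rank_ne_zero (b := b))
end

section
/- Let n ≥ 1. The set of real n×n matrices whose characteristic polynomial is not squarefree, i.e. {A : Matrix (Fin n) (Fin n) ℝ | ¬ (Matrix.charpoly A).Squarefree}, has measure zero with respect to the Lebesgue (additive Haar) measure on the real vector space of n×n real matrices. -/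
/-!
The resultant of the characteristic polynomial and its derivative is a polynomial in the matrix
entries; over a field of characteristic zero it vanishes exactly when the characteristic
polynomial is not squarefree, and it is not the zero polynomial because a diagonal matrix with
distinct entries has a squarefree characteristic polynomial. The zero set of a nonzero real
polynomial is Lebesgue-null, by induction on the number of variables: by Fubini, off the null set
where the leading coefficient in the last variable vanishes, each fibre is a finite set of roots.
Every additive Haar measure is absolutely continuous with respect to Lebesgue measure.
-/

open MeasureTheory Polynomial

namespace MvPolynomial

theorem ae_eval_ne_zero_option {σ : Type*} [Fintype σ]
    (ih : ∀ F : MvPolynomial σ ℝ, F ≠ 0 → ∀ᵐ x : σ → ℝ, eval x F ≠ 0)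
    {F : MvPolynomial (Option σ) ℝ} (hF : F ≠ 0) : ∀ᵐ x : Option σ → ℝ, eval x F ≠ 0 := by
  let e := MeasurableEquiv.piOptionEquivProd fun _ : Option σ => ℝ
  let q := optionEquivLeft ℝ σ F
  have hq : q ≠ 0 := by simpa [q] using hF
  have heval (p : (σ → ℝ) × ℝ) : eval (e.symm p) F = (q.map (eval p.1)).eval p.2 := by
    rw [← optionEquivLeft_elim_eval]
    congr 2
    funext i
    cases i <;> rfl
  have hmeas : MeasurableSet {p : (σ → ℝ) × ℝ | (q.map (eval p.1)).eval p.2 ≠ 0} := by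
    simp only [← heval]
    exact (measurableSet_singleton 0).compl.preimage
      ((continuous_eval F).measurable.comp e.symm.measurable)
  have hprod : ∀ᵐ p : (σ → ℝ) × ℝ, (q.map (eval p.1)).eval p.2 ≠ 0 := by
    rw [Measure.volume_eq_prod, Measure.ae_prod_iff_ae_ae hmeas]
    filter_upwards [ih _ (leadingCoeff_ne_zero.mpr hq)] with y hy
    have hqy : q.map (eval y) ≠ 0 := fun h =>
      hy (by rw [leadingCoeff, ← Polynomial.coeff_map, h, Polynomial.coeff_zero])
    rw [ae_iff]
    simpa using (finite_setOfPred_isRoot hqy).measure_zero volume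
  rw [volume_pi, ← Measure.pi_map_piOptionEquivProd, ae_map_iff e.symm.measurable.aemeasurable]
  · simp only [heval]
    exact hprod
  · exact (measurableSet_singleton 0).compl.preimage (continuous_eval F).measurable

theorem ae_eval_ne_zero_of_equiv {σ τ : Type*} [Fintype σ] [Fintype τ] (e : σ ≃ τ)
    (h : ∀ F : MvPolynomial σ ℝ, F ≠ 0 → ∀ᵐ x : σ → ℝ, eval x F ≠ 0)
    {F : MvPolynomial τ ℝ} (hF : F ≠ 0) : ∀ᵐ x : τ → ℝ, eval x F ≠ 0 := by
  have hG : rename e.symm F ≠ 0 :=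
    (rename_injective _ e.symm.injective).ne_iff' (map_zero _) |>.mpr hF
  have hpres := volume_measurePreserving_piCongrLeft (fun _ : σ => ℝ) e.symm
  filter_upwards [hpres.quasiMeasurePreserving.ae (h _ hG)] with x hx
  simpa [eval_rename, Function.comp_def, MeasurableEquiv.coe_piCongrLeft,
    Equiv.piCongrLeft_apply] using hx

theorem ae_eval_ne_zero {σ : Type*} [Fintype σ] {F : MvPolynomial σ ℝ} (hF : F ≠ 0) :
    ∀ᵐ x : σ → ℝ, eval x F ≠ 0 := by
  refine Fintype.induction_empty_option
    (P := fun σ _ => ∀ F : MvPolynomial σ ℝ, F ≠ 0 → ∀ᵐ x : σ → ℝ, eval x F ≠ 0) ?_ ?_ ?_ σ F hF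
  · intro σ τ _ e ih F hF
    let := Fintype.ofEquiv τ e.symm
    exact ae_eval_ne_zero_of_equiv e ih hF
  · intro F hF
    obtain ⟨c, rfl⟩ := C_surjective PEmpty F
    simpa using hF
  · intro σ _ ih F hF
    exact ae_eval_ne_zero_option ih hF

theorem ae_eval_ne_zero_of_isAddHaarMeasure {σ : Type*} [Fintype σ] (μ : Measure (σ → ℝ))
    [μ.IsAddHaarMeasure] {F : MvPolynomial σ ℝ} (hF : F ≠ 0) : ∀ᵐ x ∂μ, eval x F ≠ 0 :=
  (Measure.absolutelyContinuous_isAddHaarMeasure μ volume).ae_le (ae_eval_ne_zero hF)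

end MvPolynomial

theorem Polynomial.resultant_derivative_ne_zero_iff {K : Type*} [Field K] [PerfectField K]
    {f : K[X]} (hf : f ≠ 0) : resultant f (derivative f) ≠ 0 ↔ Squarefree f := by
  rw [ne_eq, resultant_eq_zero_iff, ← PerfectField.separable_iff_squarefree, separable_def]
  simp [hf]

namespace Matrix.charpoly

variable (K : Type*) [Field K] (n : Type*) [Fintype n] [DecidableEq n]

/-- The degrees are fixed so that this specializes to the resultant of `charpoly M` and its
derivative (`resultant_map_map`); up to sign it is the discriminant of `charpoly M`. -/
noncomputable def univResultantDerivative : MvPolynomial (n × n) K :=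
  (univ K n).resultant (derivative (univ K n)) (Fintype.card n) (Fintype.card n - 1)

variable {K n} [CharZero K]

theorem eval_univResultantDerivative (M : n × n → K) :
    MvPolynomial.eval M (univResultantDerivative K n) =
      resultant (charpoly (of M.curry)) (derivative (charpoly (of M.curry))) := by
  have hmap : (univ K n).map (MvPolynomial.eval M) = charpoly (of M.curry) :=
    univ_map_eval₂Hom n (RingHom.id K) M
  rw [univResultantDerivative, ← resultant_map_map, ← derivative_map, hmap, natDegree_derivative,
    charpoly_natDegree_eq_dim]

theorem univResultantDerivative_ne_zero : univResultantDerivative K n ≠ 0 := by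
  let v : n → K := fun i => (Fintype.equivFin n i : K)
  have hv : Function.Injective v := fun i j h =>
    (Fintype.equivFin n).injective (Fin.val_injective (Nat.cast_injective h))
  have hsq : Squarefree (diagonal v).charpoly := by
    rw [charpoly_diagonal, ← PerfectField.separable_iff_squarefree]
    exact separable_prod_X_sub_C_iff.mpr fun i j h => hv h
  intro h
  have heval := eval_univResultantDerivative fun ij : n × n => diagonal v ij.1 ij.2
  rw [h, map_zero] at heval
  exact (resultant_derivative_ne_zero_iff (charpoly_monic _).ne_zero).mpr hsq heval.symm

end Matrix.charpoly

theorem Matrix.ae_squarefree_charpoly {n : Type*} [Fintype n] [DecidableEq n]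
    [MeasurableSpace (Matrix n n ℝ)] [BorelSpace (Matrix n n ℝ)]
    (μ : Measure (Matrix n n ℝ)) [μ.IsAddHaarMeasure] : ∀ᵐ A ∂μ, Squarefree A.charpoly := by
  let L : Matrix n n ℝ ≃L[ℝ] (n × n → ℝ) :=
    ((LinearEquiv.curry ℝ ℝ n n).trans (ofLinearEquiv ℝ)).symm.toContinuousLinearEquiv
  have hL : Measurable L := L.continuous.measurable
  filter_upwards [ae_of_ae_map hL.aemeasurable (MvPolynomial.ae_eval_ne_zero_of_isAddHaarMeasure
    (μ.map L) (charpoly.univResultantDerivative_ne_zero (K := ℝ) (n := n)))] with A hA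
  rw [charpoly.eval_univResultantDerivative] at hA
  exact (resultant_derivative_ne_zero_iff (charpoly_monic A).ne_zero).mp hA

theorem non_squarefree_charpoly_measure_eq_zero_general
    (n : ℕ)
    [MeasurableSpace (Matrix (Fin n) (Fin n) ℝ)]
    [BorelSpace (Matrix (Fin n) (Fin n) ℝ)]
    (μ : Measure (Matrix (Fin n) (Fin n) ℝ)) [μ.IsAddHaarMeasure] :
    μ {A : Matrix (Fin n) (Fin n) ℝ | ¬ Squarefree (Matrix.charpoly A)} = 0 :=
  ae_iff.mp (Matrix.ae_squarefree_charpoly μ)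

/-- **Proposition 5.2 instantiated:** the set of real `n × n` matrices whose
characteristic polynomial is not squarefree has measure zero for the Lebesgue
(additive Haar) measure on the space of matrices. -/
theorem non_squarefree_charpoly_measure_eq_zero
    (n : ℕ) (hn : 1 ≤ n)
    [MeasurableSpace (Matrix (Fin n) (Fin n) ℝ)]
    [BorelSpace (Matrix (Fin n) (Fin n) ℝ)]
    (μ : Measure (Matrix (Fin n) (Fin n) ℝ)) [μ.IsAddHaarMeasure] :
    μ {A : Matrix (Fin n) (Fin n) ℝ | ¬ Squarefree (Matrix.charpoly A)} = 0 :=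
  non_squarefree_charpoly_measure_eq_zero_general n μ
end

section
/- Nonlinear noncompact (m,n) ensemble density identity: let m ≥ n ≥ 1, β > 0 a real number, x ∈ ℝⁿ, and set a_r = cosh x_r for r = 1,…,n. Then 2^{n(βm−1)} · ∏_{1 ≤ r < s ≤ n} |sinh((x_r + x_s)/2) · sinh((x_r − x_s)/2)|^β · (cosh(x_r + x_s) · cosh(x_r − x_s))^{β/2} · ∏_{r=1}^{n} |sinh(x_r/2)|^{β(m−n)} · (cosh x_r)^{β(m−n)/2} · |sinh x_r|^{β−1} · (cosh 2x_r)^{(β−1)/2} = 2^{n(β(m+1)−2)/2} · ∏_{1 ≤ r < s ≤ n} |a_r − a_s|^β · (a_r² + a_s² − 1)^{β/2} · ∏_{r=1}^{n} ((a_r² − 1)(2a_r² − 1))^{(β−1)/2} · (a_r(a_r − 1))^{β(m−n)/2}. -/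
/-!
With `a = cosh x`, the product-to-sum identities give
`sinh ((u + v) / 2) sinh ((u - v) / 2) = (cosh u - cosh v) / 2` and
`cosh (u + v) cosh (u - v) = cosh² u + cosh² v - 1`, while the half- and double-angle formulas
give `sinh² (x / 2) = (a - 1) / 2`, `sinh² x = a² - 1` and `cosh 2x = 2a² - 1`. So every factor on
the left is the corresponding factor on the right times a power of `2`; over the `n(n-1)/2` pairs
and the `n` single roots these powers add up to the difference of the two constants.
-/

open Real Finset

namespace Real

lemma sinh_half_add_mul_sinh_half_sub (u v : ℝ) :
    sinh ((u + v) / 2) * sinh ((u - v) / 2) = (cosh u - cosh v) / 2 := by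
  have hu := cosh_add ((u + v) / 2) ((u - v) / 2)
  have hv := cosh_sub ((u + v) / 2) ((u - v) / 2)
  rw [show (u + v) / 2 + (u - v) / 2 = u by ring] at hu
  rw [show (u + v) / 2 - (u - v) / 2 = v by ring] at hv
  linarith

lemma cosh_add_mul_cosh_sub (u v : ℝ) :
    cosh (u + v) * cosh (u - v) = cosh u ^ 2 + cosh v ^ 2 - 1 := by
  rw [cosh_add, cosh_sub]
  linear_combination (cosh u ^ 2 - 1) * cosh_sq_sub_sinh_sq v + sinh v ^ 2 * cosh_sq_sub_sinh_sq u

lemma sinh_half_sq (x : ℝ) : sinh (x / 2) ^ 2 = (cosh x - 1) / 2 := by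
  have h := cosh_two_mul (x / 2)
  rw [show 2 * (x / 2) = x by ring] at h
  linear_combination (-(1 : ℝ) / 2) * h - (1 / 2) * cosh_sq_sub_sinh_sq (x / 2)

lemma cosh_two_mul_eq_two_mul_cosh_sq_sub_one (x : ℝ) : cosh (2 * x) = 2 * cosh x ^ 2 - 1 := by
  linear_combination cosh_two_mul x - cosh_sq_sub_sinh_sq x

lemma abs_rpow_eq_sq_rpow_half (t c : ℝ) : |t| ^ c = (t ^ 2) ^ (c / 2) := by
  rw [rpow_div_two_eq_sqrt c (sq_nonneg t), sqrt_sq_eq_abs]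

end Real

lemma Finset.prod_rpow_const_mul {ι : Type*} (s : Finset ι) {c : ℝ} (hc : 0 ≤ c) (e : ℝ)
    (f : ι → ℝ) : ∏ i ∈ s, c ^ e * f i = c ^ (e * #s) * ∏ i ∈ s, f i := by
  rw [prod_mul_distrib, prod_const, rpow_mul_natCast hc]

lemma density_pair_factor_eq_cosh (β u v : ℝ) :
    |sinh ((u + v) / 2) * sinh ((u - v) / 2)| ^ β * (cosh (u + v) * cosh (u - v)) ^ (β / 2) =
      (2 : ℝ) ^ (-β) * (|cosh u - cosh v| ^ β * (cosh u ^ 2 + cosh v ^ 2 - 1) ^ (β / 2)) := by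
  rw [sinh_half_add_mul_sinh_half_sub, cosh_add_mul_cosh_sub, abs_div, abs_two,
    div_rpow (abs_nonneg _) zero_le_two, rpow_neg zero_le_two]
  ring

lemma density_diag_factor_eq_cosh (β k x : ℝ) :
    |sinh (x / 2)| ^ (β * k) * cosh x ^ (β * k / 2) * |sinh x| ^ (β - 1) *
        cosh (2 * x) ^ ((β - 1) / 2) =
      (2 : ℝ) ^ (-(β * k / 2)) * (((cosh x ^ 2 - 1) * (2 * cosh x ^ 2 - 1)) ^ ((β - 1) / 2) *
        (cosh x * (cosh x - 1)) ^ (β * k / 2)) := by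
  have hc := one_le_cosh x
  rw [abs_rpow_eq_sq_rpow_half, abs_rpow_eq_sq_rpow_half, sinh_half_sq, sinh_sq,
    cosh_two_mul_eq_two_mul_cosh_sq_sub_one, div_rpow (by linarith) zero_le_two,
    mul_rpow (by nlinarith) (by nlinarith), mul_rpow (by linarith) (by linarith),
    rpow_neg zero_le_two]
  ring

theorem nonlinear_noncompact_mn_density_identity_general
    (m n : ℕ) (β : ℝ) (x a : Fin n → ℝ)
    (ha : ∀ r, a r = Real.cosh (x r)) :
    (2 : ℝ) ^ ((n : ℝ) * (β * m - 1)) *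
      (∏ p ∈ Finset.univ.filter fun p : Fin n × Fin n => p.1 < p.2,
        |Real.sinh ((x p.1 + x p.2) / 2) * Real.sinh ((x p.1 - x p.2) / 2)| ^ β *
          (Real.cosh (x p.1 + x p.2) * Real.cosh (x p.1 - x p.2)) ^ (β / 2)) *
      ∏ r : Fin n,
        |Real.sinh (x r / 2)| ^ (β * ((m : ℝ) - n)) *
          Real.cosh (x r) ^ (β * ((m : ℝ) - n) / 2) *
          |Real.sinh (x r)| ^ (β - 1) *
          Real.cosh (2 * x r) ^ ((β - 1) / 2) =
    (2 : ℝ) ^ ((n : ℝ) * (β * ((m : ℝ) + 1) - 2) / 2) *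
      (∏ p ∈ Finset.univ.filter fun p : Fin n × Fin n => p.1 < p.2,
        |a p.1 - a p.2| ^ β * (a p.1 ^ 2 + a p.2 ^ 2 - 1) ^ (β / 2)) *
      ∏ r : Fin n,
        ((a r ^ 2 - 1) * (2 * a r ^ 2 - 1)) ^ ((β - 1) / 2) *
          (a r * (a r - 1)) ^ (β * ((m : ℝ) - n) / 2) := by
  simp only [ha, density_pair_factor_eq_cosh, density_diag_factor_eq_cosh]
  rw [prod_rpow_const_mul _ zero_le_two, prod_rpow_const_mul _ zero_le_two,
    Fintype.card_product_filter_lt, Fintype.card_fin, card_univ, Fintype.card_fin,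
    Nat.cast_choose_two]
  have hconst : (2 : ℝ) ^ ((n : ℝ) * (β * ((m : ℝ) + 1) - 2) / 2) =
      2 ^ ((n : ℝ) * (β * m - 1)) * 2 ^ (-β * (n * (n - 1) / 2)) *
        2 ^ (-(β * (m - n) / 2) * n) := by
    rw [← rpow_add two_pos, ← rpow_add two_pos]
    ring_nf
  rw [hconst]
  ring

/-- **Nonlinear noncompact `(m,n)` ensemble density identity** (Example 3.5,
equation (E:(m,n)nonlinear)): the joint density factor of the nonlinear noncompact
ensemble associated with `O(m,n)₀`, `U(m,n)`, `Sp(m,n)`, expressed in the variables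
`a_r = cosh x_r`. -/
theorem nonlinear_noncompact_mn_density_identity
    (m n : ℕ) (hn : 1 ≤ n) (hmn : n ≤ m) (β : ℝ) (hβ : 0 < β) (x a : Fin n → ℝ)
    (ha : ∀ r, a r = Real.cosh (x r)) :
    (2 : ℝ) ^ ((n : ℝ) * (β * m - 1)) *
      (∏ p ∈ Finset.univ.filter fun p : Fin n × Fin n => p.1 < p.2,
        |Real.sinh ((x p.1 + x p.2) / 2) * Real.sinh ((x p.1 - x p.2) / 2)| ^ β *
          (Real.cosh (x p.1 + x p.2) * Real.cosh (x p.1 - x p.2)) ^ (β / 2)) *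
      ∏ r : Fin n,
        |Real.sinh (x r / 2)| ^ (β * ((m : ℝ) - n)) *
          Real.cosh (x r) ^ (β * ((m : ℝ) - n) / 2) *
          |Real.sinh (x r)| ^ (β - 1) *
          Real.cosh (2 * x r) ^ ((β - 1) / 2) =
    (2 : ℝ) ^ ((n : ℝ) * (β * ((m : ℝ) + 1) - 2) / 2) *
      (∏ p ∈ Finset.univ.filter fun p : Fin n × Fin n => p.1 < p.2,
        |a p.1 - a p.2| ^ β * (a p.1 ^ 2 + a p.2 ^ 2 - 1) ^ (β / 2)) *
      ∏ r : Fin n,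
        ((a r ^ 2 - 1) * (2 * a r ^ 2 - 1)) ^ ((β - 1) / 2) *
          (a r * (a r - 1)) ^ (β * ((m : ℝ) - n) / 2) :=
  nonlinear_noncompact_mn_density_identity_general m n β x a ha
end

section
/- Jacobi ensemble density identity: let m ≥ n ≥ 1, β ≥ 1 a real number, x ∈ ℝⁿ, and set a_r = cos x_r for r = 1,…,n. Then 2^{β n(n−1) + β n(m−n) + (β−1)n} · ∏_{1 ≤ r < s ≤ n} |sin((x_r + x_s)/2) · sin((x_r − x_s)/2)|^β · ∏_{r=1}^{n} |sin(x_r/2)|^{β(m−n)} · |sin x_r|^{β−1} = 2^{n(β(m+1)−2)/2} · ∏_{1 ≤ r < s ≤ n} |a_r − a_s|^β · ∏_{r=1}^{n} |1 + a_r|^{(β−1)/2} · |1 − a_r|^{(β(m−n+1)−1)/2}. -/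
/-!
Every restricted-root factor becomes a factor in the variables `a_r = cos x_r` by the
half-angle formulas `cos x - cos y = -2 sin ((x + y) / 2) sin ((x - y) / 2)`,
`1 - cos t = 2 sin² (t / 2)`, `1 + cos t = 2 cos² (t / 2)` and
`sin t = 2 sin (t / 2) cos (t / 2)`. What remains is to collect the powers of `2`, using that
there are `n (n - 1) / 2` pairs `r < s`.
-/

open Real Finset

namespace Real

lemma one_add_cos_eq_two_mul_cos_half_sq (t : ℝ) : 1 + cos t = 2 * cos (t / 2) ^ 2 := by
  rw [cos_sq, mul_div_cancel₀ t two_ne_zero]; ring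

lemma one_sub_cos_eq_two_mul_sin_half_sq (t : ℝ) : 1 - cos t = 2 * sin (t / 2) ^ 2 := by
  rw [sin_sq_eq_half_sub, mul_div_cancel₀ t two_ne_zero]; ring

lemma two_mul_sq_rpow_half (s q : ℝ) : (2 * s ^ 2) ^ (q / 2) = 2 ^ (q / 2) * |s| ^ q := by
  rw [mul_rpow zero_le_two (sq_nonneg s), ← sq_abs, ← rpow_natCast, ← rpow_mul (abs_nonneg s)]
  push_cast
  ring_nf

lemma abs_one_add_cos_rpow_half (t q : ℝ) :
    |1 + cos t| ^ (q / 2) = 2 ^ (q / 2) * |cos (t / 2)| ^ q := by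
  rw [one_add_cos_eq_two_mul_cos_half_sq, abs_of_nonneg (by positivity), two_mul_sq_rpow_half]

lemma abs_one_sub_cos_rpow_half (t q : ℝ) :
    |1 - cos t| ^ (q / 2) = 2 ^ (q / 2) * |sin (t / 2)| ^ q := by
  rw [one_sub_cos_eq_two_mul_sin_half_sq, abs_of_nonneg (by positivity), two_mul_sq_rpow_half]

lemma abs_sin_rpow_eq_half_angle (t q : ℝ) :
    |sin t| ^ q = 2 ^ q * |sin (t / 2)| ^ q * |cos (t / 2)| ^ q := by
  have hsin : sin t = 2 * sin (t / 2) * cos (t / 2) := by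
    rw [← sin_two_mul, mul_div_cancel₀ t two_ne_zero]
  rw [hsin, abs_mul, abs_mul, abs_two, mul_rpow (by positivity) (abs_nonneg _),
    mul_rpow zero_le_two (abs_nonneg _)]

lemma abs_cos_sub_cos_rpow (x y β : ℝ) :
    |cos x - cos y| ^ β = 2 ^ β * |sin ((x + y) / 2) * sin ((x - y) / 2)| ^ β := by
  rw [cos_sub_cos, mul_assoc, abs_mul, abs_neg, abs_two, mul_rpow zero_le_two (abs_nonneg _)]

/-- Both sides equal `2 ^ ((p + 2 q) / 2) * |sin (t / 2)| ^ (p + q) * |cos (t / 2)| ^ q`. Since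
`0 ^ 0 = 1` for `rpow`, splitting `|sin (t / 2)| ^ (p + q)` needs `0 ≤ p` and `0 ≤ q`. -/
lemma two_rpow_mul_abs_sin_half_rpow_mul_abs_sin_rpow {p q : ℝ} (hp : 0 ≤ p) (hq : 0 ≤ q)
    (t : ℝ) :
    2 ^ (p / 2) * (|sin (t / 2)| ^ p * |sin t| ^ q) =
      |1 + cos t| ^ (q / 2) * |1 - cos t| ^ ((p + q) / 2) := by
  have htwo : (2 : ℝ) ^ (p / 2) * 2 ^ q = 2 ^ (q / 2) * 2 ^ ((p + q) / 2) := by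
    rw [← rpow_add two_pos, ← rpow_add two_pos]; ring_nf
  rw [abs_one_add_cos_rpow_half, abs_one_sub_cos_rpow_half, abs_sin_rpow_eq_half_angle t q,
    rpow_add_of_nonneg (abs_nonneg _) hp hq]
  linear_combination (|sin (t / 2)| ^ p * |sin (t / 2)| ^ q * |cos (t / 2)| ^ q) * htwo

end Real

theorem jacobi_density_identity_general
    (m n : ℕ) (hmn : n ≤ m) (β : ℝ) (hβ : 1 ≤ β) (x a : Fin n → ℝ)
    (ha : ∀ r, a r = Real.cos (x r)) :
    (2 : ℝ) ^ (β * n * ((n : ℝ) - 1) + β * n * ((m : ℝ) - n) + (β - 1) * n) *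
      (∏ p ∈ Finset.univ.filter fun p : Fin n × Fin n => p.1 < p.2,
        |Real.sin ((x p.1 + x p.2) / 2) * Real.sin ((x p.1 - x p.2) / 2)| ^ β) *
      ∏ r : Fin n,
        |Real.sin (x r / 2)| ^ (β * ((m : ℝ) - n)) * |Real.sin (x r)| ^ (β - 1) =
    (2 : ℝ) ^ ((n : ℝ) * (β * ((m : ℝ) + 1) - 2) / 2) *
      (∏ p ∈ Finset.univ.filter fun p : Fin n × Fin n => p.1 < p.2,
        |a p.1 - a p.2| ^ β) *
      ∏ r : Fin n,
        |1 + a r| ^ ((β - 1) / 2) *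
          |1 - a r| ^ ((β * ((m : ℝ) - n + 1) - 1) / 2) := by
  obtain rfl : a = fun r => cos (x r) := funext ha
  have hp : 0 ≤ β * ((m : ℝ) - n) :=
    mul_nonneg (by linarith) (sub_nonneg.2 (Nat.cast_le.2 hmn))
  have hpairs : ∏ p ∈ univ.filter fun p : Fin n × Fin n => p.1 < p.2,
      |cos (x p.1) - cos (x p.2)| ^ β =
        2 ^ (β * (n * (n - 1) / 2)) * ∏ p ∈ univ.filter fun p : Fin n × Fin n => p.1 < p.2,
          |sin ((x p.1 + x p.2) / 2) * sin ((x p.1 - x p.2) / 2)| ^ β := by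
    rw [prod_congr rfl fun p _ => abs_cos_sub_cos_rpow _ _ β, prod_mul_distrib, prod_const,
      Fintype.card_product_filter_lt, Fintype.card_fin, ← rpow_natCast, ← rpow_mul zero_le_two,
      Nat.cast_choose_two]
  have hcoords : 2 ^ (β * (m - n) / 2 * n) *
      ∏ r : Fin n, |sin (x r / 2)| ^ (β * ((m : ℝ) - n)) * |sin (x r)| ^ (β - 1) =
        ∏ r : Fin n, |1 + cos (x r)| ^ ((β - 1) / 2) *
          |1 - cos (x r)| ^ ((β * ((m : ℝ) - n + 1) - 1) / 2) := by
    rw [rpow_mul_natCast zero_le_two, ← Fin.prod_const, ← prod_mul_distrib]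
    refine prod_congr rfl fun r _ => ?_
    rw [two_rpow_mul_abs_sin_half_rpow_mul_abs_sin_rpow hp (by linarith),
      show β * ((m : ℝ) - n) + (β - 1) = β * (m - n + 1) - 1 by ring]
  have htwo : (2 : ℝ) ^ (β * n * ((n : ℝ) - 1) + β * n * ((m : ℝ) - n) + (β - 1) * n) =
      2 ^ ((n : ℝ) * (β * ((m : ℝ) + 1) - 2) / 2) * 2 ^ (β * (n * (n - 1) / 2)) *
        2 ^ (β * (m - n) / 2 * n) := by
    rw [← rpow_add two_pos, ← rpow_add two_pos]; ring_nf
  rw [hpairs, ← hcoords, htwo]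
  ring

/-- **Jacobi ensemble density identity** (Example 4.5, equation (E:J:Jacobi)): the
joint density factor of the compact ensemble associated with `SO(m+n)`, `U(m+n)`,
`Sp(m+n)`, expressed in the variables `a_r = cos x_r`. -/
theorem jacobi_density_identity
    (m n : ℕ) (hn : 1 ≤ n) (hmn : n ≤ m) (β : ℝ) (hβ : 1 ≤ β) (x a : Fin n → ℝ)
    (ha : ∀ r, a r = Real.cos (x r)) :
    (2 : ℝ) ^ (β * n * ((n : ℝ) - 1) + β * n * ((m : ℝ) - n) + (β - 1) * n) *
      (∏ p ∈ Finset.univ.filter fun p : Fin n × Fin n => p.1 < p.2,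
        |Real.sin ((x p.1 + x p.2) / 2) * Real.sin ((x p.1 - x p.2) / 2)| ^ β) *
      ∏ r : Fin n,
        |Real.sin (x r / 2)| ^ (β * ((m : ℝ) - n)) * |Real.sin (x r)| ^ (β - 1) =
    (2 : ℝ) ^ ((n : ℝ) * (β * ((m : ℝ) + 1) - 2) / 2) *
      (∏ p ∈ Finset.univ.filter fun p : Fin n × Fin n => p.1 < p.2,
        |a p.1 - a p.2| ^ β) *
      ∏ r : Fin n,
        |1 + a r| ^ ((β - 1) / 2) *
          |1 - a r| ^ ((β * ((m : ℝ) - n + 1) - 1) / 2) :=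
  jacobi_density_identity_general m n hmn β hβ x a ha
end

section
/- Harish-Chandra density identity for SO(2n+1,ℂ): let n ≥ 1, let z_1, …, z_n be complex numbers, and set h_r = cos z_r for r = 1,…,n (complex cosine). Then ∏_{1 ≤ r < s ≤ n} |1 − e^{i(z_r + z_s)}|² · |1 − e^{−i(z_r + z_s)}|² · |1 − e^{i(z_r − z_s)}|² · |1 − e^{−i(z_r − z_s)}|² · ∏_{r=1}^{n} |1 − e^{i z_r}|² · |1 − e^{−i z_r}|² = 2^{2n²} · ∏_{1 ≤ r < s ≤ n} |h_r − h_s|⁴ · ∏_{r=1}^{n} |1 − h_r|², where |·| denotes the complex absolute value, e^w the complex exponential, and cos the complex cosine. -/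
/-!
Each root pair `±α` contributes `|1 - e^{iw}|²|1 - e^{-iw}|² = 4|1 - cos w|²`, since
`(1 - e^{iw})(1 - e^{-iw}) = 2(1 - cos w)`. For the short roots `w = z_r` this is `4|1 - h_r|²`;
for the long roots the identity `(1 - cos(a + b))(1 - cos(a - b)) = (cos a - cos b)²` combines
`w = z_r ± z_s` into `16|h_r - h_s|⁴`. Counting the `n(n-1)/2` pairs and `n` singletons gives
the constant `16^{n(n-1)/2} 4^n = 2^{2n²}`.
-/

open Complex Finset

namespace Complex

lemma one_sub_exp_mul_one_sub_exp_neg (w : ℂ) :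
    (1 - exp (I * w)) * (1 - exp (-(I * w))) = 2 * (1 - cos w) := by
  have hinv : exp (I * w) * exp (-(I * w)) = 1 := by rw [← exp_add, add_neg_cancel, exp_zero]
  rw [cos, neg_mul, mul_comm w I]
  linear_combination hinv

lemma norm_one_sub_exp_sq_mul_norm_one_sub_exp_neg_sq (w : ℂ) :
    ‖1 - exp (I * w)‖ ^ 2 * ‖1 - exp (-(I * w))‖ ^ 2 = 4 * ‖1 - cos w‖ ^ 2 := by
  rw [← mul_pow, ← norm_mul, one_sub_exp_mul_one_sub_exp_neg, norm_mul, mul_pow]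
  norm_num

lemma one_sub_cos_add_mul_one_sub_cos_sub (a b : ℂ) :
    (1 - cos (a + b)) * (1 - cos (a - b)) = (cos a - cos b) ^ 2 := by
  rw [cos_add, cos_sub]
  linear_combination (-sin b ^ 2) * sin_sq_add_cos_sq a + (cos a ^ 2 - 1) * sin_sq_add_cos_sq b

lemma norm_one_sub_exp_add_sub_sq_prod (a b : ℂ) :
    ‖1 - exp (I * (a + b))‖ ^ 2 * ‖1 - exp (-(I * (a + b)))‖ ^ 2 *
        ‖1 - exp (I * (a - b))‖ ^ 2 * ‖1 - exp (-(I * (a - b)))‖ ^ 2 =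
      16 * ‖cos a - cos b‖ ^ 4 := by
  rw [mul_assoc _ (‖1 - exp (I * (a - b))‖ ^ 2), norm_one_sub_exp_sq_mul_norm_one_sub_exp_neg_sq,
    norm_one_sub_exp_sq_mul_norm_one_sub_exp_neg_sq,
    show (4 : ℝ) * ‖1 - cos (a + b)‖ ^ 2 * (4 * ‖1 - cos (a - b)‖ ^ 2) =
      16 * ‖(1 - cos (a + b)) * (1 - cos (a - b))‖ ^ 2 by rw [norm_mul]; ring,
    one_sub_cos_add_mul_one_sub_cos_sub, norm_pow, ← pow_mul]

end Complex

lemma Nat.two_mul_choose_two_add_self (n : ℕ) : 2 * n.choose 2 + n = n ^ 2 := by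
  rw [Nat.choose_two_right, Nat.mul_div_cancel' n.even_mul_pred_self.two_dvd]
  cases n <;> simp [Nat.mul_add, sq]

lemma sixteen_pow_choose_two_mul_four_pow {R : Type*} [Semiring R] (n : ℕ) :
    (16 : R) ^ n.choose 2 * 4 ^ n = 2 ^ (2 * n ^ 2) := by
  rw [← Nat.two_mul_choose_two_add_self, show (16 : R) = 2 ^ 4 by norm_num,
    show (4 : R) = 2 ^ 2 by norm_num, ← pow_mul, ← pow_mul, ← pow_add]
  ring_nf

theorem harish_chandra_density_SO_odd_general
    (n : ℕ) (z h : Fin n → ℂ)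
    (hh : ∀ r, h r = Complex.cos (z r)) :
    (∏ p ∈ Finset.univ.filter fun p : Fin n × Fin n => p.1 < p.2,
      ‖1 - Complex.exp (Complex.I * (z p.1 + z p.2))‖ ^ 2 *
        ‖1 - Complex.exp (-(Complex.I * (z p.1 + z p.2)))‖ ^ 2 *
        ‖1 - Complex.exp (Complex.I * (z p.1 - z p.2))‖ ^ 2 *
        ‖1 - Complex.exp (-(Complex.I * (z p.1 - z p.2)))‖ ^ 2) *
      ∏ r : Fin n,
        ‖1 - Complex.exp (Complex.I * z r)‖ ^ 2 *
          ‖1 - Complex.exp (-(Complex.I * z r))‖ ^ 2 =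
    (2 : ℝ) ^ (2 * n ^ 2) *
      (∏ p ∈ Finset.univ.filter fun p : Fin n × Fin n => p.1 < p.2,
        ‖h p.1 - h p.2‖ ^ 4) *
      ∏ r : Fin n, ‖1 - h r‖ ^ 2 := by
  rw [prod_congr rfl fun (p : Fin n × Fin n) _ => norm_one_sub_exp_add_sub_sq_prod (z p.1) (z p.2)]
  simp only [hh, norm_one_sub_exp_sq_mul_norm_one_sub_exp_neg_sq, prod_mul_distrib, prod_const,
    Fintype.card_product_filter_lt, card_univ, Fintype.card_fin]
  rw [← sixteen_pow_choose_two_mul_four_pow]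
  ring

/-- **Harish-Chandra density identity for `SO(2n+1,ℂ)`** (Example 6.7): with
`h_r = cos z_r`,
`∏_{r<s} |1-e^{i(z_r+z_s)}|²|1-e^{-i(z_r+z_s)}|²|1-e^{i(z_r-z_s)}|²|1-e^{-i(z_r-z_s)}|²
  · ∏_r |1-e^{i z_r}|²|1-e^{-i z_r}|²
  = 2^{2n²} ∏_{r<s} |h_r - h_s|⁴ ∏_r |1 - h_r|²`. -/
theorem harish_chandra_density_SO_odd
    (n : ℕ) (hn : 1 ≤ n) (z h : Fin n → ℂ)
    (hh : ∀ r, h r = Complex.cos (z r)) :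
    (∏ p ∈ Finset.univ.filter fun p : Fin n × Fin n => p.1 < p.2,
      ‖1 - Complex.exp (Complex.I * (z p.1 + z p.2))‖ ^ 2 *
        ‖1 - Complex.exp (-(Complex.I * (z p.1 + z p.2)))‖ ^ 2 *
        ‖1 - Complex.exp (Complex.I * (z p.1 - z p.2))‖ ^ 2 *
        ‖1 - Complex.exp (-(Complex.I * (z p.1 - z p.2)))‖ ^ 2) *
      ∏ r : Fin n,
        ‖1 - Complex.exp (Complex.I * z r)‖ ^ 2 *
          ‖1 - Complex.exp (-(Complex.I * z r))‖ ^ 2 =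
    (2 : ℝ) ^ (2 * n ^ 2) *
      (∏ p ∈ Finset.univ.filter fun p : Fin n × Fin n => p.1 < p.2,
        ‖h p.1 - h p.2‖ ^ 4) *
      ∏ r : Fin n, ‖1 - h r‖ ^ 2 :=
  harish_chandra_density_SO_odd_general n z h hh
end
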